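/- In a generalised category with families (u, u̇, Σ ⊣ Δ), the functor Δ preserves cartesian arrows if and only if Σ reflects cartesian arrows (i.e. whenever Σf is u-cartesian, f is u̇-cartesian). -/

import Mathlib

open CategoryTheory

/-- An arrow `f : X ⟶ Y` in `E` is `p`-cartesian if every `g : Z ⟶ Y` whose image factors
through `p f` lifts uniquely. -/
def IsCartesian {E B : Type*} [Category E] [Category B] (p : E ⥤ B)
    {X Y : E} (f : X ⟶ Y) : Prop :=
  ∀ ⦃Z : E⦄ (g : Z ⟶ Y) (h : p.obj Z ⟶ p.obj X),
    h ≫ p.map f = p.map g → ∃! l : Z ⟶ X, p.map l = h ∧ l ≫ f = g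

/-- A functor `p : E ⥤ B` is a (Grothendieck) fibration if every arrow into the image of an
object of `E` has a cartesian lift. -/
def IsFibration {E B : Type*} [Category E] [Category B] (p : E ⥤ B) : Prop :=
  ∀ (Y : E) (X : B) (φ : X ⟶ p.obj Y),
    ∃ (Z : E) (f : Z ⟶ Y) (e : p.obj Z = X),
      IsCartesian p f ∧ p.map f = eqToHom e ≫ φ

/-- A generalised category with families: fibrations `u : U ⥤ B` and `ut : Ut ⥤ B`, a cartesian
functor `S` ("Σ") over `B` with a right adjoint `D` ("Δ"), such that the unit of the adjunction
is componentwise `ut`-cartesian and the counit is componentwise `u`-cartesian. -/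
structure GCwF (B U Ut : Type*) [Category B] [Category U] [Category Ut] where
  u : U ⥤ B
  ut : Ut ⥤ B
  u_fib : IsFibration u
  ut_fib : IsFibration ut
  S : Ut ⥤ U
  D : U ⥤ Ut
  over_eq : S ⋙ u = ut
  S_cart : ∀ {a b : Ut} (f : a ⟶ b), IsCartesian ut f → IsCartesian u (S.map f)
  adj : S ⊣ D
  unit_cart : ∀ a : Ut, IsCartesian ut (adj.unit.app a)
  counit_cart : ∀ A : U, IsCartesian u (adj.counit.app A)

/-!
Cartesian arrows are closed under composition and have the left-cancellation property. The
naturality squares of the unit and counit have cartesian horizontal sides, so `g` is cartesian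
as soon as `ΔΣg` is, and `ΣΔf` is cartesian as soon as `f` is.
-/

namespace IsCartesian

variable {E B : Type*} [Category E] [Category B] {p : E ⥤ B} {X Y Z : E}

lemma comp {f : X ⟶ Y} {g : Y ⟶ Z} (hf : IsCartesian p f) (hg : IsCartesian p g) :
    IsCartesian p (f ≫ g) := by
  intro W w h hw
  obtain ⟨l₁, ⟨hl₁p, hl₁c⟩, hl₁u⟩ :=
    hg w (h ≫ p.map f) (by rwa [Category.assoc, ← p.map_comp])
  obtain ⟨l, ⟨hlp, hlc⟩, hlu⟩ := hf l₁ h hl₁p.symm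
  refine ⟨l, ⟨hlp, by rw [← Category.assoc, hlc, hl₁c]⟩, ?_⟩
  rintro l' ⟨hl'p, hl'c⟩
  have hl'f : l' ≫ f = l₁ :=
    hl₁u (l' ≫ f) ⟨by rw [p.map_comp, hl'p], by rwa [Category.assoc]⟩
  exact hlu l' ⟨hl'p, hl'f⟩

lemma of_comp {f : X ⟶ Y} {g : Y ⟶ Z} (hfg : IsCartesian p (f ≫ g)) (hg : IsCartesian p g) :
    IsCartesian p f := by
  intro W w h hw
  obtain ⟨l, ⟨hlp, hlc⟩, hlu⟩ :=
    hfg (w ≫ g) h (by rw [p.map_comp, p.map_comp, ← hw, Category.assoc])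
  -- `l ≫ f` and `w` are both lifts of `w ≫ g` through `g` over `p.map w`.
  have hlf : l ≫ f = w := by
    obtain ⟨m, -, hmu⟩ := hg (w ≫ g) (p.map w) (p.map_comp w g).symm
    rw [hmu (l ≫ f) ⟨by rw [p.map_comp, hlp, hw], by rw [Category.assoc, hlc]⟩,
      hmu w ⟨rfl, rfl⟩]
  refine ⟨l, ⟨hlp, hlf⟩, ?_⟩
  rintro l' ⟨hl'p, hl'c⟩
  exact hlu l' ⟨hl'p, by rw [← Category.assoc, hl'c]⟩

lemma of_comm_sq {X' : E} {f : X ⟶ Y} {g : Y ⟶ Z} {f' : X ⟶ X'} {g' : X' ⟶ Z}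
    (w : f ≫ g = f' ≫ g') (hf' : IsCartesian p f') (hg' : IsCartesian p g')
    (hg : IsCartesian p g) : IsCartesian p f :=
  of_comp (w ▸ hf'.comp hg') hg

end IsCartesian

/-- in a gcwf, `Δ` preserves cartesian arrows if and only if `Σ` reflects
cartesian arrows. -/
theorem gcwf_delta_preserves_iff_sigma_reflects
    {B U Ut : Type*} [Category B] [Category U] [Category Ut] (G : GCwF B U Ut) :
    (∀ {A A' : U} (f : A ⟶ A'), IsCartesian G.u f → IsCartesian G.ut (G.D.map f)) ↔
    (∀ {a b : Ut} (g : a ⟶ b), IsCartesian G.u (G.S.map g) → IsCartesian G.ut g) := by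
  constructor
  · intro hD a b g hg
    exact IsCartesian.of_comm_sq (G.adj.unit_naturality g).symm (G.unit_cart a) (hD _ hg)
      (G.unit_cart b)
  · intro hS A A' f hf
    exact hS _ <| IsCartesian.of_comm_sq (G.adj.counit_naturality f) (G.counit_cart A) hf
      (G.counit_cart A')
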